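/- A morphism f : X → Y of quasi-categories is essentially surjective (i.e. the induced functor P(f) of path categories is essentially surjective) if and only if the induced map π₀J(f) : π₀J(X) → π₀J(Y) on connected components of the maximal Kan subcomplexes is surjective. -/

import Mathlib

/-! # Preamble A: basic quasi-category theory -/

namespace Paper
open CategoryTheory Simplicial Opposite MonoidalCategory

noncomputable section

/-! ## The path category (fundamental category) `P X` of a simplicial set.
`P : sSet ⥤ Cat` is the left adjoint of the nerve functor; concretely `P X` is the
free category on the graph `X₁ ⇉ X₀` modulo the relations `d₁σ = d₂σ ≫ d₀σ` for
`σ ∈ X₂` and `s₀ x = 𝟙 x` for `x ∈ X₀`. -/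

/-- The vertices of a simplicial set. -/
def Vtx (X : SSet.{0}) : Type := X _⦋0⦌

instance vtxQuiver (X : SSet.{0}) : Quiver (Vtx X) :=
  ⟨fun x y => {e : X _⦋1⦌ // X.δ 1 e = x ∧ X.δ 0 e = y}⟩

/-- The free category on the 1-truncation of `X`. -/
abbrev FreeCat (X : SSet.{0}) := Paths (Vtx X)

/-- A single edge, as a morphism of the free category. -/
def edg {X : SSet.{0}} {x y : Vtx X} (e : X _⦋1⦌) (h1 : X.δ 1 e = x) (h0 : X.δ 0 e = y) :
    ((Paths.of _).obj x ⟶ (Paths.of _).obj y) :=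
  Quiver.Hom.toPath (⟨e, h1, h0⟩ : x ⟶ y)

end
end Paper

namespace Paper
open CategoryTheory Opposite MonoidalCategory

/-- The relations defining the path category of a simplicial set. -/
inductive pRel (X : SSet.{0}) : HomRel (FreeCat X) where
  | tri {x y z : Vtx X} (σ : X.obj (op (SimplexCategory.mk 2)))
      (h1 : X.δ 1 (X.δ 2 σ) = x) (h2 : X.δ 0 (X.δ 2 σ) = y)
      (h3 : X.δ 1 (X.δ 0 σ) = y) (h4 : X.δ 0 (X.δ 0 σ) = z)
      (h5 : X.δ 1 (X.δ 1 σ) = x) (h6 : X.δ 0 (X.δ 1 σ) = z) :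
      pRel X (edg (X.δ 2 σ) h1 h2 ≫ edg (X.δ 0 σ) h3 h4) (edg (X.δ 1 σ) h5 h6)
  | deg (x : Vtx X) (h1 : X.δ 1 (X.σ 0 x) = x) (h0 : X.δ 0 (X.σ 0 x) = x) :
      pRel X (edg (X.σ 0 x) h1 h0) (𝟙 ((Paths.of _).obj x))

end Paper

namespace Paper
open CategoryTheory Simplicial Opposite MonoidalCategory

noncomputable section

/-- The path category (fundamental category) `P X` of a simplicial set `X`. -/
def PC (X : SSet.{0}) : Type := CategoryTheory.Quotient (pRel X)

instance pcCategory (X : SSet.{0}) : Category.{0} (PC X) :=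
  inferInstanceAs (Category.{0} (CategoryTheory.Quotient (pRel X)))

/-- Objects of the path category. -/
def pObj {X : SSet.{0}} (x : Vtx X) : PC X :=
  (Quotient.functor (pRel X)).obj ((Paths.of _).obj x)

/-- The morphism of the path category determined by an edge. -/
def pEdge {X : SSet.{0}} {x y : Vtx X} (e : X _⦋1⦌) (h1 : X.δ 1 e = x) (h0 : X.δ 0 e = y) :
    pObj x ⟶ pObj y :=
  (Quotient.functor (pRel X)).map (edg e h1 h0)

lemma pComp {Y : SSet.{0}} (σ : Y _⦋2⦌) {x y z : Vtx Y} {e01 e12 e02 : Y _⦋1⦌}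
    (he01 : Y.δ 2 σ = e01) (he12 : Y.δ 0 σ = e12) (he02 : Y.δ 1 σ = e02)
    (p1 : Y.δ 1 e01 = x) (p2 : Y.δ 0 e01 = y) (p3 : Y.δ 1 e12 = y) (p4 : Y.δ 0 e12 = z)
    (p5 : Y.δ 1 e02 = x) (p6 : Y.δ 0 e02 = z) :
    pEdge e01 p1 p2 ≫ pEdge e12 p3 p4 = pEdge e02 p5 p6 := by
  subst he01 he12 he02
  simp only [pEdge]
  erw [← Functor.map_comp]
  exact CategoryTheory.Quotient.sound _ (pRel.tri σ p1 p2 p3 p4 p5 p6)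

lemma pIdent {Y : SSet.{0}} (x : Vtx Y) {e : Y _⦋1⦌} (he : Y.σ 0 x = e)
    (p1 : Y.δ 1 e = x) (p0 : Y.δ 0 e = x) :
    pEdge e p1 p0 = 𝟙 (pObj x) := by
  subst he
  simp only [pEdge]
  have h2 : (𝟙 (pObj x) : pObj x ⟶ pObj x)
      = (Quotient.functor (pRel Y)).map (𝟙 ((Paths.of _).obj x)) := by
    rw [CategoryTheory.Functor.map_id]; rfl
  rw [h2]
  exact CategoryTheory.Quotient.sound _ (pRel.deg x p1 p0)

lemma delta_nat {X Y : SSet.{0}} (f : X ⟶ Y) {n : ℕ} (i : Fin (n + 2)) (e : X _⦋n + 1⦌) :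
    f.app (op ⦋n⦌) (X.δ i e) = Y.δ i (f.app (op ⦋n + 1⦌) e) :=
  NatTrans.naturality_apply f (SimplexCategory.δ i).op e

lemma sigma_nat {X Y : SSet.{0}} (f : X ⟶ Y) {n : ℕ} (i : Fin (n + 1)) (e : X _⦋n⦌) :
    f.app (op ⦋n + 1⦌) (X.σ i e) = Y.σ i (f.app (op ⦋n⦌) e) :=
  NatTrans.naturality_apply f (SimplexCategory.σ i).op e

/-- The prefunctor underlying `P f`. -/
def pPre {X Y : SSet.{0}} (f : X ⟶ Y) : Vtx X ⥤q PC Y where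
  obj x := pObj (f.app (op ⦋0⦌) x)
  map {x y} e := pEdge (f.app (op ⦋1⦌) e.1)
    (by rw [← delta_nat, e.2.1]) (by rw [← delta_nat, e.2.2])

/-- The functor `P f : P X ⥤ P Y` induced by a map of simplicial sets. -/
def pFun {X Y : SSet.{0}} (f : X ⟶ Y) : PC X ⥤ PC Y := by
  refine CategoryTheory.Quotient.lift _ (Paths.lift (pPre f)) ?_
  intro a b g₁ g₂ h
  induction h with
  | @tri x y z σ h1 h2 h3 h4 h5 h6 =>
      rw [Functor.map_comp]
      simp only [edg, Paths.lift_toPath]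
      exact pComp (f.app (op ⦋2⦌) σ) (delta_nat f 2 σ).symm (delta_nat f 0 σ).symm
        (delta_nat f 1 σ).symm
        (by rw [← delta_nat, h1]; rfl) (by rw [← delta_nat, h2]; rfl) (by rw [← delta_nat, h3]; rfl)
        (by rw [← delta_nat, h4]; rfl) (by rw [← delta_nat, h5]; rfl) (by rw [← delta_nat, h6]; rfl)
  | deg x h1 h0 =>
      rw [CategoryTheory.Functor.map_id]
      simp only [edg, Paths.lift_toPath]
      exact pIdent (f.app (op ⦋0⦌) x) (sigma_nat f 0 x).symm
        (by rw [← delta_nat, h1]) (by rw [← delta_nat, h0])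

lemma pFun_obj {X Y : SSet.{0}} (f : X ⟶ Y) (x : Vtx X) :
    (pFun f).obj (pObj x) = pObj (f.app (op ⦋0⦌) x) := rfl

lemma pFun_map_edge {X Y : SSet.{0}} (f : X ⟶ Y) {x y : Vtx X} (e : X _⦋1⦌)
    (h1 : X.δ 1 e = x) (h0 : X.δ 0 e = y) :
    (pFun f).map (pEdge e h1 h0)
      = pEdge (f.app (op ⦋1⦌) e) (by rw [← delta_nat, h1]; rfl) (by rw [← delta_nat, h0]; rfl) := by
  show (Paths.lift (pPre f)).map (edg e h1 h0) = _
  simp only [edg, Paths.lift_toPath]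
  rfl

/-- A map of simplicial sets is *essentially surjective* iff the induced functor of
path categories is essentially surjective. -/
def EssSurjSSet {X Y : SSet.{0}} (f : X ⟶ Y) : Prop := (pFun f).EssSurj

/-! ## `π₀` of a simplicial set -/

/-- The set of connected components of a simplicial set. -/
def pi0 (X : SSet.{0}) : Type :=
  Quot (fun x y : X _⦋0⦌ => ∃ e : X _⦋1⦌, X.δ 1 e = x ∧ X.δ 0 e = y)

/-- The induced map on connected components. -/
def pi0Map {X Y : SSet.{0}} (f : X ⟶ Y) : pi0 X → pi0 Y :=
  Quot.map (f.app (op ⦋0⦌)) (by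
    rintro x y ⟨e, h1, h0⟩
    exact ⟨f.app (op ⦋1⦌) e, by rw [← delta_nat, h1], by rw [← delta_nat, h0]⟩)

/-! ## The maximal Kan subcomplex `J X` of a quasi-category -/

/-- An edge of `X` is invertible if it becomes an isomorphism in the path category. -/
def edgeInv (X : SSet.{0}) (e : X _⦋1⦌) : Prop := IsIso (pEdge e rfl rfl)

lemma edgeInv_of_isIso {Y : SSet.{0}} (e : Y _⦋1⦌) {x y : Vtx Y}
    (h1 : Y.δ 1 e = x) (h0 : Y.δ 0 e = y) (h : IsIso (pEdge e h1 h0)) : edgeInv Y e := by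
  subst h1 h0; exact h

/-- `J X`: the maximal subcomplex of `X` whose 1-simplices are invertible in `P X`.
For a quasi-category `X` this is the maximal Kan subcomplex. -/
def Jc (X : SSet.{0}) : SSet.{0} where
  obj Δ := {x : X.obj Δ // ∀ φ : (⦋1⦌ : SimplexCategory) ⟶ Δ.unop, edgeInv X (X.map φ.op x)}
  map {Δ₁ Δ₂} θ := ↾fun x => ⟨X.map θ x.1, by
    intro φ
    have h := x.2 (φ ≫ θ.unop)
    have e : X.map (φ ≫ θ.unop).op x.1 = X.map φ.op (X.map θ x.1) := by
      rw [op_comp, FunctorToTypes.map_comp_apply, Quiver.Hom.op_unop]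
    rwa [e] at h⟩
  map_id Δ := by
    ext x
    exact FunctorToTypes.map_id_apply X x.1
  map_comp {Δ₁ Δ₂ Δ₃} θ ψ := by
    ext x
    exact FunctorToTypes.map_comp_apply X θ ψ x.1

/-- The inclusion `J X ⟶ X`. -/
def JtoX (X : SSet.{0}) : Jc X ⟶ X where
  app Δ := ↾fun x => x.1
  naturality _ _ _ := rfl

lemma edgeInv_map {X Y : SSet.{0}} (f : X ⟶ Y) (e : X _⦋1⦌) (h : edgeInv X e) :
    edgeInv Y (f.app (op ⦋1⦌) e) := by
  have h2 : IsIso ((pFun f).map (pEdge e rfl rfl)) := by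
    have : IsIso (pEdge e rfl rfl) := h
    infer_instance
  erw [pFun_map_edge] at h2
  exact edgeInv_of_isIso _ _ _ h2

/-- The induced map `J f : J X ⟶ J Y`. -/
def Jmap {X Y : SSet.{0}} (f : X ⟶ Y) : Jc X ⟶ Jc Y where
  app Δ := ↾fun x => ⟨f.app Δ x.1, by
    intro φ
    have h := edgeInv_map f (X.map φ.op x.1) (x.2 φ)
    rwa [FunctorToTypes.naturality] at h⟩
  naturality Δ₁ Δ₂ θ := by
    ext x
    apply Subtype.ext
    exact NatTrans.naturality_apply f θ x.1

end
end Paper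
/-! # Preamble A2: Joyal equivalences, weak homotopy equivalences -/

namespace Paper
open CategoryTheory Simplicial Opposite MonoidalCategory

noncomputable section

noncomputable instance : MonoidalClosed SSet.{0} :=
  (inferInstance : MonoidalClosed (SimplexCategoryᵒᵖ ⥤ Type 0))

/-- The internal hom `X^K` of simplicial sets. -/
def iHom (K X : SSet.{0}) : SSet.{0} := (ihom K).obj X

/-- Contravariant functoriality of the internal hom. -/
def iHomPre {A B : SSet.{0}} (f : A ⟶ B) (X : SSet.{0}) : iHom B X ⟶ iHom A X :=
  (MonoidalClosed.pre f).app X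

/-- Isomorphism classes of objects of a category. -/
def isoCl (C : Type*) [Category C] : Type _ := Quotient (isIsomorphicSetoid C)

def isoClMap {C : Type*} {D : Type*} [Category C] [Category D] (F : C ⥤ D) :
    isoCl C → isoCl D :=
  Quotient.map F.obj (fun _ _ h => h.elim fun i => ⟨F.mapIso i⟩)

/-- Joyal's set `τ₀(K, X)`: isomorphism classes of objects of `P(X^K)`. -/
def tau0 (K X : SSet.{0}) : Type := isoCl (PC (iHom K X))

def tau0Map {A B : SSet.{0}} (f : A ⟶ B) (X : SSet.{0}) : tau0 B X → tau0 A X :=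
  isoClMap (pFun (iHomPre f X))

/-- A map of simplicial sets is a *Joyal equivalence* iff for every quasi-category `X`
the induced map `τ₀(B, X) → τ₀(A, X)` is a bijection. -/
def JoyalEquiv {A B : SSet.{0}} (f : A ⟶ B) : Prop :=
  ∀ X : SSet.{0}, SSet.Quasicategory X → Function.Bijective (tau0Map f X)

/-! ## Homotopy classes of maps and weak homotopy equivalences -/

/-- The two endpoints of a cylinder object, in a category with chosen finite products. -/
def cylIncl {D : Type*} [Category D] [CartesianMonoidalCategory D] {Cyl : D} (j : 𝟙_ D ⟶ Cyl)
    (A : D) : A ⟶ A ⊗ Cyl :=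
  CartesianMonoidalCategory.lift (𝟙 A) (CartesianMonoidalCategory.toUnit A ≫ j)

/-- Homotopy of maps `A ⟶ Z` via a cylinder `Cyl` with chosen endpoints `j0, j1`. -/
def HomotopicVia {D : Type*} [Category D] [CartesianMonoidalCategory D] (Cyl : D)
    (j0 j1 : 𝟙_ D ⟶ Cyl) {A Z : D} (f g : A ⟶ Z) : Prop :=
  ∃ H : A ⊗ Cyl ⟶ Z, cylIncl j0 A ≫ H = f ∧ cylIncl j1 A ≫ H = g

/-- Homotopy classes of maps `A ⟶ Z` with respect to a cylinder. -/
def hoClVia {D : Type*} [Category D] [CartesianMonoidalCategory D] (Cyl : D)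
    (j0 j1 : 𝟙_ D ⟶ Cyl) (A Z : D) : Type _ :=
  Quot (fun f g : A ⟶ Z => HomotopicVia Cyl j0 j1 f g)

lemma cylIncl_whisker {D : Type*} [Category D] [CartesianMonoidalCategory D] {Cyl : D}
    (j : 𝟙_ D ⟶ Cyl) {A B : D} (f : A ⟶ B) :
    cylIncl j A ≫ (f ▷ Cyl) = f ≫ cylIncl j B := by
  apply CartesianMonoidalCategory.hom_ext
  · simp [cylIncl]
  · simp only [cylIncl, Category.assoc, CartesianMonoidalCategory.whiskerRight_snd,
      CartesianMonoidalCategory.lift_snd]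
    rw [← Category.assoc, CartesianMonoidalCategory.toUnit_unique (f ≫ CartesianMonoidalCategory.toUnit B)
      (CartesianMonoidalCategory.toUnit A)]

/-- Precomposition on homotopy classes. -/
def hoClViaPre {D : Type*} [Category D] [CartesianMonoidalCategory D] (Cyl : D)
    (j0 j1 : 𝟙_ D ⟶ Cyl) {A B : D} (f : A ⟶ B) (Z : D) :
    hoClVia Cyl j0 j1 B Z → hoClVia Cyl j0 j1 A Z :=
  Quot.map (fun g => f ≫ g) (by
    rintro g₁ g₂ ⟨H, h0, h1⟩
    refine ⟨(f ▷ Cyl) ≫ H, ?_, ?_⟩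
    · rw [← Category.assoc, cylIncl_whisker, Category.assoc, h0]
    · rw [← Category.assoc, cylIncl_whisker, Category.assoc, h1])

/-- The vertex `i` of `Δ[1]`, as a map from the monoidal unit. -/
def stdPt {n : ℕ} (i : Fin (n + 1)) : (𝟙_ SSet.{0}) ⟶ Δ[n] where
  app m := ↾fun _ => SSet.stdSimplex.objEquiv.symm (SimplexCategory.const _ ⦋n⦌ i)
  naturality m₁ m₂ θ := by
    ext u
    rfl

/-- Kan complexes, with the meaning `SSet.KanComplex` had in the older Mathlib
(extension along every horn inclusion `Λ[n, i] ⟶ Δ[n]`, including `n = 0`). -/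
def KanCx (S : SSet.{0}) : Prop :=
  ∀ ⦃n : ℕ⦄ ⦃i : Fin (n + 1)⦄ (σ₀ : (Λ[n, i] : SSet) ⟶ S), ∃ σ : Δ[n] ⟶ S, σ₀ = Λ[n, i].ι ≫ σ

/-- Homotopy classes of maps of simplicial sets (with respect to the standard cylinder). -/
def hoCl (A Z : SSet.{0}) : Type _ := hoClVia Δ[1] (stdPt 0) (stdPt 1) A Z

/-- f is a weak homotopy equivalence iff it induces bijections of homotopy classes of
maps into every Kan complex. -/
def WeakEquivSSet {A B : SSet.{0}} (f : A ⟶ B) : Prop :=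
  ∀ Z : SSet.{0}, KanCx Z →
    Function.Bijective (hoClViaPre Δ[1] (stdPt 0) (stdPt 1) f Z)

/-! ## The interval `I = Bπ(Δ¹)`, the nerve of the free-standing isomorphism -/

/-- The free-standing isomorphism: the groupoid completion `π(Δ¹)` of `[1]`,
i.e. the indiscrete groupoid on two objects. -/
def IsoInt : Type := Bool

instance : Category IsoInt where
  Hom _ _ := PUnit
  id _ := ⟨⟩
  comp _ _ := ⟨⟩

/-- `I = Bπ(Δ¹)`, the nerve of the free-standing isomorphism. -/
def Ival : SSet.{0} := nerve IsoInt

/-- The endpoint `b : 𝟙_ SSet ⟶ I`. -/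
def IvalPt (b : Bool) : (𝟙_ SSet.{0}) ⟶ Ival where
  app m := ↾fun _ => (Functor.const _).obj (b : IsoInt)
  naturality m₁ m₂ θ := by
    ext u
    exact CategoryTheory.Functor.ext (fun _ => rfl) (fun _ _ _ => rfl)

end
end Paper
/-! # Preamble B: slices over a vertex and mapping spaces -/

namespace Paper
open CategoryTheory Simplicial Opposite MonoidalCategory

noncomputable section

/-- `θ ⋆ id_{[0]}` : the map `[m+1] ⟶ ⦋n+1⦌` extending `θ : [m] ⟶ ⦋n⦌` by the last vertex. -/
def extendLast {x y : SimplexCategory} (θ : x ⟶ y) :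
    (⦋x.len + 1⦌ : SimplexCategory) ⟶ ⦋y.len + 1⦌ :=
  SimplexCategory.mkHom
    { toFun := fun i =>
        if h : i.val < x.len + 1 then (θ.toOrderHom ⟨i.val, h⟩).castSucc else Fin.last _
      monotone' := by
        intro a b hab
        dsimp only
        by_cases ha : a.val < x.len + 1 <;> by_cases hb : b.val < x.len + 1
        · rw [dif_pos ha, dif_pos hb]
          exact Fin.castSucc_le_castSucc_iff.mpr (θ.toOrderHom.monotone hab)
        · rw [dif_pos ha, dif_neg hb]
          exact Fin.le_last _
        · exact absurd (lt_of_le_of_lt (show a.val ≤ b.val from hab) hb) ha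
        · rw [dif_neg ha, dif_neg hb] }

lemma extendLast_val {x y : SimplexCategory} (θ : x ⟶ y) (i : Fin (x.len + 2)) :
    (((extendLast θ).toOrderHom i) : ℕ)
      = if h : i.val < x.len + 1 then ((θ.toOrderHom ⟨i.val, h⟩) : ℕ) else y.len + 1 := by
  show ((if h : i.val < x.len + 1 then (θ.toOrderHom ⟨i.val, h⟩).castSucc else Fin.last _ :
      Fin (y.len + 1 + 1)) : ℕ) = _
  split_ifs <;> rfl

lemma extendLast_id (x : SimplexCategory) :
    extendLast (𝟙 x) = 𝟙 (⦋x.len + 1⦌ : SimplexCategory) := by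
  apply SimplexCategory.Hom.ext
  apply OrderHom.ext
  funext i
  apply Fin.ext
  change (((extendLast (𝟙 x)).toOrderHom i) : ℕ) = (i : ℕ)
  rw [extendLast_val]
  have hi := i.isLt
  simp only [SimplexCategory.len_mk] at hi
  split_ifs with h
  · rfl
  · omega

lemma extendLast_comp {x y z : SimplexCategory} (θ : x ⟶ y) (ψ : y ⟶ z) :
    extendLast (θ ≫ ψ) = extendLast θ ≫ extendLast ψ := by
  apply SimplexCategory.Hom.ext
  apply OrderHom.ext
  funext i
  apply Fin.ext
  change (((extendLast (θ ≫ ψ)).toOrderHom i) : ℕ)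
      = (((extendLast ψ).toOrderHom ((extendLast θ).toOrderHom i)) : ℕ)
  rw [extendLast_val, extendLast_val]
  by_cases h : i.val < x.len + 1
  · rw [dif_pos h]
    have h2 : (((extendLast θ).toOrderHom i) : ℕ) < y.len + 1 := by
      rw [extendLast_val, dif_pos h]
      exact (θ.toOrderHom ⟨i.val, h⟩).isLt
    rw [dif_pos h2]
    have h3 : (⟨(((extendLast θ).toOrderHom i) : ℕ), h2⟩ : Fin (y.len + 1))
        = θ.toOrderHom ⟨i.val, h⟩ := by
      apply Fin.ext
      rw [extendLast_val, dif_pos h]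
    rw [h3]
    rfl
  · rw [dif_neg h]
    have h2 : ¬ ((((extendLast θ).toOrderHom i) : ℕ) < y.len + 1) := by
      rw [extendLast_val, dif_neg h]
      omega
    rw [dif_neg h2]

/-- The last vertex `[0] ⟶ ⦋n+1⦌`. -/
def lastPt (n : ℕ) : (⦋0⦌ : SimplexCategory) ⟶ ⦋n + 1⦌ :=
  SimplexCategory.const _ _ (Fin.last (n + 1))

lemma lastPt_extend {x y : SimplexCategory} (θ : x ⟶ y) :
    lastPt x.len ≫ extendLast θ = lastPt y.len := by
  apply SimplexCategory.Hom.ext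
  apply OrderHom.ext
  funext i
  apply Fin.ext
  change (((extendLast θ).toOrderHom (Fin.last (x.len + 1))) : ℕ) = ((Fin.last (y.len + 1)) : ℕ)
  rw [extendLast_val, dif_neg (by simp [Fin.last])]
  rfl

/-- The front face `[n] ⟶ ⦋n+1⦌`. -/
def frontIncl (n : ℕ) : (⦋n⦌ : SimplexCategory) ⟶ ⦋n + 1⦌ :=
  SimplexCategory.mkHom
    { toFun := fun i => Fin.castSucc ⟨i.val, by have := i.isLt; simpa using this⟩
      monotone' := fun _ _ h => by
        simpa using h }

lemma frontIncl_extend {x y : SimplexCategory} (θ : x ⟶ y) :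
    frontIncl x.len ≫ extendLast θ = θ ≫ frontIncl y.len := by
  apply SimplexCategory.Hom.ext
  apply OrderHom.ext
  funext i
  apply Fin.ext
  show (((extendLast θ).toOrderHom ((frontIncl x.len).toOrderHom i)) : ℕ) = _
  rw [extendLast_val]
  have hi : (((frontIncl x.len).toOrderHom i) : ℕ) = i.val := rfl
  rw [dif_pos (by rw [hi]; have := i.isLt; simpa using this)]
  rfl

lemma toZero_unique {x : SimplexCategory} (f g : x ⟶ ⦋0⦌) : f = g := by
  apply SimplexCategory.Hom.ext
  apply OrderHom.ext
  funext i
  apply Fin.ext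
  have h1 := (f.toOrderHom i).isLt
  have h2 := (g.toOrderHom i).isLt
  simp only [SimplexCategory.len_mk] at h1 h2
  omega

/-- The right mapping space `Map_X(x, y) = Hom_X^R(x,y)` of a simplicial set:
an `n`-simplex is an `(n+1)`-simplex of `X` whose last vertex is `y` and whose
front `n`-face is degenerate at `x`.  (This is the pullback of the canonical
projection from the slice `X_{/y}` along `x : * ⟶ X`.) -/
def MapSS (X : SSet.{0}) (x y : Vtx X) : SSet.{0} where
  obj Δ := {σ : X.obj (op ⦋Δ.unop.len + 1⦌) //
      X.map (lastPt Δ.unop.len).op σ = y ∧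
      X.map (frontIncl Δ.unop.len).op σ = X.map (SimplexCategory.const Δ.unop ⦋0⦌ 0).op x}
  map {Δ₁ Δ₂} θ := ↾fun σ => ⟨X.map (extendLast θ.unop).op σ.1, by
      constructor
      · rw [← FunctorToTypes.map_comp_apply, ← op_comp, lastPt_extend θ.unop, σ.2.1]
      · rw [← FunctorToTypes.map_comp_apply, ← op_comp, frontIncl_extend θ.unop, op_comp,
          FunctorToTypes.map_comp_apply, σ.2.2]
        erw [← FunctorToTypes.map_comp_apply]
        rw [← op_comp,
          toZero_unique (θ.unop ≫ SimplexCategory.const Δ₁.unop ⦋0⦌ 0)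
            (SimplexCategory.const Δ₂.unop ⦋0⦌ 0)]⟩
  map_id Δ := by
    ext σ
    show X.map (extendLast (𝟙 Δ.unop)).op σ.1 = σ.1
    rw [extendLast_id, op_id, FunctorToTypes.map_id_apply]
  map_comp {Δ₁ Δ₂ Δ₃} θ ψ := by
    ext σ
    show X.map (extendLast (ψ.unop ≫ θ.unop)).op σ.1 = _
    rw [extendLast_comp, op_comp, FunctorToTypes.map_comp_apply]
    rfl

/-- The map induced on mapping spaces by a map of simplicial sets. -/
def mapSSMap {X Y : SSet.{0}} (f : X ⟶ Y) (x y : Vtx X) {x' y' : Vtx Y}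
    (hx : f.app (op ⦋0⦌) x = x') (hy : f.app (op ⦋0⦌) y = y') :
    MapSS X x y ⟶ MapSS Y x' y' where
  app Δ := ↾fun σ => ⟨f.app _ σ.1, by
    constructor
    · rw [← hy, ← (NatTrans.naturality_apply f _ _), σ.2.1]
    · rw [← hx, ← (NatTrans.naturality_apply f _ _), σ.2.2]
      erw [NatTrans.naturality_apply f _ _]⟩
  naturality Δ₁ Δ₂ θ := by
    ext σ
    apply Subtype.ext
    exact NatTrans.naturality_apply f (extendLast θ.unop).op σ.1

/-- A map of quasi-categories is fully faithful iff all induced maps of (right)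
mapping spaces are weak homotopy equivalences. -/
def FullyFaithfulSSet {X Y : SSet.{0}} (f : X ⟶ Y) : Prop :=
  ∀ x y : Vtx X, WeakEquivSSet (mapSSMap f x y rfl rfl)

end
end Paper
/-! # Preamble D: simplicial presheaves -/

namespace Paper
open CategoryTheory Simplicial Opposite MonoidalCategory

noncomputable section

/-- Simplicial presheaves on a small category `C`. -/
abbrev SPre (C : Type) [SmallCategory C] := Cᵒᵖ ⥤ SSet.{0}

variable {C : Type} [SmallCategory C]

/-- Sectionwise Joyal equivalences of simplicial presheaves. -/
def SectionwiseJoyalEquiv {X Y : SPre C} (f : X ⟶ Y) : Prop :=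
  ∀ U : Cᵒᵖ, JoyalEquiv (f.app U)

/-- Sectionwise weak homotopy equivalences of simplicial presheaves. -/
def SectionwiseWeakEquiv {X Y : SPre C} (f : X ⟶ Y) : Prop :=
  ∀ U : Cᵒᵖ, WeakEquivSSet (f.app U)

/-- A presheaf of quasi-categories. -/
def PresheafOfQCats (X : SPre C) : Prop := ∀ U : Cᵒᵖ, SSet.Quasicategory (X.obj U)

/-- A presheaf of Kan complexes. -/
def PresheafOfKan (X : SPre C) : Prop := ∀ U : Cᵒᵖ, KanCx (X.obj U)

/-- The functor `J : SSet ⥤ SSet` taking maximal subcomplexes of invertible edges. -/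
def JFun : SSet.{0} ⥤ SSet.{0} where
  obj X := Jc X
  map f := Jmap f
  map_id X := by
    apply NatTrans.ext
    funext Δ; ext x
    rfl
  map_comp f g := by
    apply NatTrans.ext
    funext Δ; ext x
    rfl

/-- `J(X)` applied sectionwise to a simplicial presheaf. -/
def JPre (X : SPre C) : SPre C := X ⋙ JFun

/-- The discrete (simplicially constant) simplicial presheaf on a presheaf of sets. -/
def discPre (P : Cᵒᵖ ⥤ Type) : SPre C := P ⋙ Functor.const SimplexCategoryᵒᵖ

def discPreMap {P Q : Cᵒᵖ ⥤ Type} (f : P ⟶ Q) : (discPre P ⟶ discPre Q) :=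
  Functor.whiskerRight f (Functor.const SimplexCategoryᵒᵖ)

/-- `*|_U = Ū`: the representable simplicial presheaf on `U`. -/
def unitPre (C : Type) [SmallCategory C] (U : C) : SPre C := discPre (yoneda.obj U)

/-- `*|_R`: the subobject of `*|_U` determined by a sieve `R` on `U`. -/
def sievePre {U : C} (R : Sieve U) : SPre C := discPre R.functor

/-- The inclusion `*|_R ⟶ *|_U`. -/
def sieveIncl {U : C} (R : Sieve U) : sievePre R ⟶ unitPre C U :=
  discPreMap R.functorInclusion

/-- The local right lifting property of `f` with respect to `i : A ⟶ B`
(Definition 2.1 of the paper). -/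
def LocalRLP (J : GrothendieckTopology C) {X Y : SPre C} (f : X ⟶ Y)
    {A B : SSet.{0}} (i : A ⟶ B) : Prop :=
  ∀ (U : C) (α : A ⟶ X.obj (op U)) (β : B ⟶ Y.obj (op U)), α ≫ f.app (op U) = i ≫ β →
    ∃ R ∈ J.sieves U, ∀ ⦃V : C⦄ (φ : V ⟶ U), R φ →
      ∃ γ : B ⟶ X.obj (op V), i ≫ γ = α ≫ X.map φ.op ∧ γ ≫ f.app (op V) = β ≫ Y.map φ.op

/-- Local trivial fibrations: maps with the local right lifting property with respect
to all boundary inclusions `∂Δⁿ ⊆ Δⁿ`. -/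
def LocalTrivialFibration (J : GrothendieckTopology C) {X Y : SPre C} (f : X ⟶ Y) : Prop :=
  ∀ n : ℕ, LocalRLP J f (SSet.boundary n).ι

/-- The presheaf of `n`-simplices of a simplicial presheaf. -/
def levelPre (V : SPre C) (n : SimplexCategory) : Cᵒᵖ ⥤ Type := V.flip.obj (op n)

/-- `π : V ⟶ Ū` is a hypercover of `U`: a local trivial fibration such that every
`V_n` is a coproduct of representables. -/
def IsHypercover (J : GrothendieckTopology C) (U : C) (V : SPre C)
    (π : V ⟶ unitPre C U) : Prop :=
  LocalTrivialFibration J π ∧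
  ∀ n : SimplexCategory, ∃ (ι : Type) (u : ι → C),
    Nonempty (levelPre V n ≅ ∐ (fun i : ι => yoneda.obj (u i)))

/-- The simplicial function complex `sHom(P, X)` for a presheaf of sets `P` and a
simplicial presheaf `X`; its `n`-simplices are the maps `P ⟶ Xₙ`. -/
def sHomPre (P : Cᵒᵖ ⥤ Type) (X : SPre C) : SSet.{0} :=
  X.flip ⋙ coyoneda.obj (op P)

/-- Contravariant functoriality of `sHom(−, X)`. -/
def sHomPreMap {P Q : Cᵒᵖ ⥤ Type} (f : P ⟶ Q) (X : SPre C) :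
    sHomPre Q X ⟶ sHomPre P X :=
  Functor.whiskerLeft X.flip (coyoneda.map f.op)

/-- `sHom(−, X)` as a functor. -/
def sHomFun (X : SPre C) : (Cᵒᵖ ⥤ Type)ᵒᵖ ⥤ SSet.{0} :=
  coyoneda ⋙ (Functor.whiskeringLeft SimplexCategoryᵒᵖ (Cᵒᵖ ⥤ Type) Type).obj X.flip

/-- The cosimplicial simplicial set `n ↦ X(V_n) = sHom(V_n, X)` associated to a
simplicial presheaf `V` (e.g. a hypercover). -/
def hyperDiagram (V : SPre C) (X : SPre C) : SimplexCategory ⥤ SSet.{0} :=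
  V.flip.rightOp ⋙ sHomFun X

/-- The `n`-th component of a map `V ⟶ Ū` of simplicial presheaves, as a map of
presheaves of sets `V_n ⟶ yoneda U`. -/
def levelNat {U : C} {V : SPre C} (π : V ⟶ unitPre C U) (n : SimplexCategory) :
    levelPre V n ⟶ yoneda.obj U where
  app W := ↾fun x => (π.app W).app (op n) x
  naturality W₁ W₂ g := by
    ext x
    exact congr_arg (fun (t : V.obj W₁ ⟶ (unitPre C U).obj W₂) => t.app (op n) x)
      (π.naturality g)

lemma sHomPreMap_comp {P Q R : Cᵒᵖ ⥤ Type} (f : P ⟶ Q) (g : Q ⟶ R) (X : SPre C) :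
    sHomPreMap g X ≫ sHomPreMap f X = sHomPreMap (f ≫ g) X := by
  apply NatTrans.ext
  funext m; ext t
  exact (Category.assoc f g t).symm

/-- The unit of the Yoneda-type adjunction: `X(U) ⟶ sHom(Ū, X)`. -/
def yonedaPart (X : SPre C) (U : C) : X.obj (op U) ⟶ sHomPre (yoneda.obj U) X where
  app m := ↾fun a => yonedaEquiv.symm a
  naturality m₁ m₂ η := by
    ext a
    apply NatTrans.ext
    funext W
    ext φ
    exact NatTrans.naturality_apply (X.map φ.op) η a

/-- The canonical cone from `X(U)` over the cosimplicial object `n ↦ X(V_n)`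
determined by a map `π : V ⟶ Ū`. -/
def hyperCone (X : SPre C) {U : C} {V : SPre C} (π : V ⟶ unitPre C U) :
    (Functor.const SimplexCategory).obj (X.obj (op U)) ⟶ hyperDiagram V X where
  app n := yonedaPart X U ≫ sHomPreMap (levelNat π n) X
  naturality n₁ n₂ η := by
    have key : V.flip.map η.op ≫ levelNat π n₁ = levelNat π n₂ := by
      apply NatTrans.ext
      funext W; ext x
      exact NatTrans.naturality_apply (π.app W) η.op x
    have hmap : (hyperDiagram V X).map η = sHomPreMap (V.flip.map η.op) X := rfl
    erw [Category.id_comp, Category.assoc, hmap, sHomPreMap_comp, key]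
    rfl

end
end Paper
/-! # Preamble E: model structures, local model structures, descent -/

namespace Paper
open CategoryTheory Simplicial Opposite MonoidalCategory

noncomputable section

/-- A (Quillen) model structure on a category `D`, including the characterisations of
the (co)fibrations by lifting properties. -/
structure ModelStr (D : Type*) [Category D] : Type _ where
  weq : MorphismProperty D
  cof : MorphismProperty D
  fib : MorphismProperty D
  weq_iso : ∀ {a b : D} (e : a ≅ b), weq e.hom
  weq_comp : ∀ {a b c : D} (f : a ⟶ b) (g : b ⟶ c), weq f → weq g → weq (f ≫ g)
  weq_right_cancel : ∀ {a b c : D} (f : a ⟶ b) (g : b ⟶ c), weq f → weq (f ≫ g) → weq g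
  weq_left_cancel : ∀ {a b c : D} (f : a ⟶ b) (g : b ⟶ c), weq g → weq (f ≫ g) → weq f
  lift_triv_cof : ∀ {a b x y : D} (i : a ⟶ b) (p : x ⟶ y),
    cof i → weq i → fib p → HasLiftingProperty i p
  lift_triv_fib : ∀ {a b x y : D} (i : a ⟶ b) (p : x ⟶ y),
    cof i → fib p → weq p → HasLiftingProperty i p
  fact_left : ∀ {a b : D} (f : a ⟶ b),
    ∃ (c : D) (i : a ⟶ c) (p : c ⟶ b), cof i ∧ weq i ∧ fib p ∧ i ≫ p = f
  fact_right : ∀ {a b : D} (f : a ⟶ b),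
    ∃ (c : D) (i : a ⟶ c) (p : c ⟶ b), cof i ∧ fib p ∧ weq p ∧ i ≫ p = f
  cof_llp : ∀ {a b : D} (i : a ⟶ b),
    (∀ {x y : D} (p : x ⟶ y), fib p → weq p → HasLiftingProperty i p) → cof i
  fib_rlp : ∀ {x y : D} (p : x ⟶ y),
    (∀ {a b : D} (i : a ⟶ b), cof i → weq i → HasLiftingProperty i p) → fib p

/-- A fibrant object of a model structure (equivalently: the map to the terminal object
is a fibration), characterised by the extension property against trivial cofibrations. -/
def ModelStr.fibrantObj {D : Type*} [Category D] (M : ModelStr D) (Z : D) : Prop :=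
  ∀ {a b : D} (i : a ⟶ b), M.cof i → M.weq i → ∀ α : a ⟶ Z, ∃ β : b ⟶ Z, i ≫ β = α

/-- A cofibrant object of a model structure. -/
def ModelStr.cofibrantObj {D : Type*} [Category D] (M : ModelStr D) (A : D) : Prop :=
  ∀ {x y : D} (p : x ⟶ y), M.fib p → M.weq p → ∀ α : A ⟶ y, ∃ β : A ⟶ x, β ≫ p = α

variable {C : Type} [SmallCategory C]

/-- Sectionwise weak equivalences, as a morphism property. -/
def sectionwiseWeq : MorphismProperty (SPre C) := fun _ _ f => SectionwiseWeakEquiv f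

/-- Sectionwise Joyal equivalences, as a morphism property. -/
def sectionwiseJoyal : MorphismProperty (SPre C) := fun _ _ f => SectionwiseJoyalEquiv f

/-- `W` is a candidate class of local weak equivalences relative to the class `sw` of
sectionwise equivalences: it is the class of weak equivalences of a model structure on
simplicial presheaves whose cofibrations are the monomorphisms, it contains the
sectionwise equivalences, and it contains the local trivial fibrations. -/
def IsLocalWeqCandidate (J : GrothendieckTopology C)
    (sw W : MorphismProperty (SPre C)) : Prop :=
  (∃ M : ModelStr (SPre C), M.weq = W ∧ M.cof = MorphismProperty.monomorphisms (SPre C)) ∧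
  (∀ {X Y : SPre C} (f : X ⟶ Y), sw f → W f) ∧
  (∀ {X Y : SPre C} (f : X ⟶ Y), LocalTrivialFibration J f → W f)

/-- `W` is *the* class of local equivalences for the topology `J` relative to the class
`sw` of sectionwise equivalences: the smallest candidate class.  (The local model
structures are the left Bousfield localizations of the global injective model
structures at the hypercovers, so their classes of weak equivalences are the least
candidate classes.) -/
def IsLocalWeqClass (J : GrothendieckTopology C) (sw W : MorphismProperty (SPre C)) : Prop :=
  IsLocalWeqCandidate J sw W ∧ ∀ W', IsLocalWeqCandidate J sw W' → W ≤ W'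

/-- `W` is the class of local weak equivalences of the Jardine model structure. -/
def IsLocalWeakEquivalences (J : GrothendieckTopology C)
    (W : MorphismProperty (SPre C)) : Prop :=
  IsLocalWeqClass J sectionwiseWeq W

/-- `W` is the class of local Joyal equivalences of the local Joyal model structure. -/
def IsLocalJoyalEquivalences (J : GrothendieckTopology C)
    (W : MorphismProperty (SPre C)) : Prop :=
  IsLocalWeqClass J sectionwiseJoyal W

/-- Fibrancy for the model structure with weak equivalences `W` and cofibrations the
monomorphisms (an object has the extension property against trivial cofibrations). -/
def WFibrant (W : MorphismProperty (SPre C)) (Z : SPre C) : Prop :=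
  ∀ {A B : SPre C} (i : A ⟶ B), Mono i → W i → ∀ α : A ⟶ Z, ∃ β : B ⟶ Z, i ≫ β = α

/-- `j : X ⟶ X'` is a fibrant replacement for the model structure with weak equivalences
`W` and cofibrations the monomorphisms. -/
def IsFibrantReplacement (W : MorphismProperty (SPre C)) {X X' : SPre C}
    (j : X ⟶ X') : Prop :=
  W j ∧ WFibrant W X'

/-- `X` satisfies descent for the local model structure with weak equivalences `locW`:
every fibrant replacement map `X ⟶ ℒ(X)` is a sectionwise equivalence (w.r.t. `sw`). -/
def SatisfiesDescent (locW sw : MorphismProperty (SPre C)) (X : SPre C) : Prop :=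
  ∀ (X' : SPre C) (j : X ⟶ X'), IsFibrantReplacement locW j → sw j

/-- Injective descent (for the Jardine model structure with weak equivalence class
`locW`): the fibrant replacement map is a sectionwise weak equivalence. -/
def InjectiveDescent (locW : MorphismProperty (SPre C)) (X : SPre C) : Prop :=
  SatisfiesDescent locW sectionwiseWeq X

/-- Quasi-injective descent (for the local Joyal model structure with weak equivalence
class `locW`): the fibrant replacement map is a sectionwise Joyal equivalence. -/
def QuasiInjectiveDescent (locW : MorphismProperty (SPre C)) (X : SPre C) : Prop :=
  SatisfiesDescent locW sectionwiseJoyal X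

/-! ## The homotopy category of the global injective Joyal model structure -/

/-- The homotopy category of the global injective Joyal model structure on simplicial
presheaves (all objects are cofibrant, so this is the localization of the category of
simplicial presheaves at the sectionwise Joyal equivalences). -/
abbrev HoGlobalJoyal (C : Type) [SmallCategory C] :=
  (sectionwiseJoyal (C := C)).Localization

/-- The localization functor onto the homotopy category of the global injective Joyal
model structure. -/
abbrev hoQ (C : Type) [SmallCategory C] : SPre C ⥤ HoGlobalJoyal C :=
  (sectionwiseJoyal (C := C)).Q

/-- Effective descent (Definition 5.1): `[*|U , X]_q ⟶ ⦋*|R , X⦌_q` is surjective, where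
`[ , ]_q` denotes maps in the homotopy category of the global injective Joyal model
structure. -/
def EffectiveDescent (X : SPre C) {U : C} (R : Sieve U) : Prop :=
  Function.Surjective (fun g : ((hoQ C).obj (unitPre C U) ⟶ (hoQ C).obj X) =>
    ((hoQ C).map (sieveIncl R) ≫ g : (hoQ C).obj (sievePre R) ⟶ (hoQ C).obj X))

/-- Effective descent with respect to every covering sieve. -/
def EffectiveDescentAll (J : GrothendieckTopology C) (X : SPre C) : Prop :=
  ∀ (U : C) (R : Sieve U), R ∈ J.sieves U → EffectiveDescent X R

/-! ## Restriction and mapping space presheaves -/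

/-- The restriction `X|_U` of a simplicial presheaf to the slice site `C/U`. -/
def restrictPre (X : SPre C) (U : C) : SPre (Over U) :=
  (Over.forget U).op ⋙ X

/-- Restriction of a vertex of `X(U)` along `φ : V ⟶ U`. -/
def restr0 (X : SPre C) {V U : C} (φ : V ⟶ U) (x : Vtx (X.obj (op U))) :
    Vtx (X.obj (op V)) :=
  (X.map φ.op).app (op ⦋0⦌) x

lemma restr0_comp (X : SPre C) {W V U : C} (ψ : W ⟶ V) (φ : V ⟶ U)
    (x : Vtx (X.obj (op U))) :
    restr0 X ψ (restr0 X φ x) = restr0 X (ψ ≫ φ) x := by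
  show (X.map ψ.op).app (op ⦋0⦌) ((X.map φ.op).app (op ⦋0⦌) x)
      = (X.map (ψ ≫ φ).op).app (op ⦋0⦌) x
  rw [op_comp, X.map_comp]
  rfl

/-- The mapping space presheaf `Map_{X|U}(x, y)` on the slice site `C/U`. -/
def MapPresheaf (X : SPre C) (U : C) (x y : Vtx (X.obj (op U))) : SPre (Over U) where
  obj g := MapSS (X.obj (op g.unop.left)) (restr0 X g.unop.hom x) (restr0 X g.unop.hom y)
  map {g₁ g₂} h := mapSSMap (X.map h.unop.left.op) _ _
    (by rw [show (X.map h.unop.left.op).app (op ⦋0⦌) (restr0 X g₁.unop.hom x)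
          = restr0 X h.unop.left (restr0 X g₁.unop.hom x) from rfl,
        restr0_comp, Over.w h.unop])
    (by rw [show (X.map h.unop.left.op).app (op ⦋0⦌) (restr0 X g₁.unop.hom y)
          = restr0 X h.unop.left (restr0 X g₁.unop.hom y) from rfl,
        restr0_comp, Over.w h.unop])
  map_id g := by
    apply NatTrans.ext
    funext Δ; ext σ
    apply Subtype.ext
    show (X.map (𝟙 (op g.unop.left))).app (op ⦋Δ.unop.len + 1⦌) σ.1 = σ.1
    rw [X.map_id]
    rfl
  map_comp {g₁ g₂ g₃} h₁ h₂ := by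
    apply NatTrans.ext
    funext Δ; ext σ
    apply Subtype.ext
    show (X.map ((h₁ ≫ h₂).unop.left.op)).app (op ⦋Δ.unop.len + 1⦌) σ.1 = _
    rw [show ((h₁ ≫ h₂).unop.left.op : op g₁.unop.left ⟶ op g₃.unop.left)
        = h₁.unop.left.op ≫ h₂.unop.left.op from rfl, X.map_comp]
    rfl

/-- A morphism of `C` generates a covering iff the sieve it generates is a covering
sieve. -/
def GeneratesCover (J : GrothendieckTopology C) {V U : C} (φ : V ⟶ U) : Prop :=
  Sieve.generate (Presieve.singleton φ) ∈ J.sieves U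

end
end Paper
/-! # Preamble F: homotopy limits and descent conditions -/

namespace Paper
open CategoryTheory Simplicial Opposite MonoidalCategory Limits

noncomputable section

/-- The class of Joyal equivalences. -/
abbrev joyalW : {A B : SSet.{0}} → (A ⟶ B) → Prop := @JoyalEquiv

/-- The class of weak homotopy equivalences. -/
abbrev kanW : {A B : SSet.{0}} → (A ⟶ B) → Prop := @WeakEquivSSet

/-- The class of essentially surjective maps. -/
abbrev essSurjW : {A B : SSet.{0}} → (A ⟶ B) → Prop := @EssSurjSSet

/-- A diagram of simplicial sets is *injective fibrant* (w.r.t. a class `W` of weak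
equivalences of simplicial sets) if it has the extension property against all
objectwise-trivial monomorphisms of diagrams. -/
def DiagInjFibrant {I : Type} [SmallCategory I]
    (W : {A B : SSet.{0}} → (A ⟶ B) → Prop) (D : I ⥤ SSet.{0}) : Prop :=
  ∀ (A B : I ⥤ SSet.{0}) (i : A ⟶ B), Mono i → (∀ x : I, W (i.app x)) →
    ∀ α : A ⟶ D, ∃ β : B ⟶ D, i ≫ β = α

/-- `j : D ⟶ D'` exhibits `D'` as an injective fibrant replacement of the diagram `D`
in the injective model structure on `I`-diagrams of simplicial sets determined by the
weak equivalences `W`. -/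
def IsDiagFibrantReplacement {I : Type} [SmallCategory I]
    (W : {A B : SSet.{0}} → (A ⟶ B) → Prop) {D D' : I ⥤ SSet.{0}} (j : D ⟶ D') : Prop :=
  (∀ x : I, W (j.app x)) ∧ DiagInjFibrant W D'

/-- Given a cone `c` over a diagram `D` of simplicial sets with apex `S`, this is the
statement that the induced map `S ⟶ holim D` satisfies the property `Q`, where the
homotopy limit is computed in the model structure on `SSet` with weak equivalence class
`W` (as the limit of any injective fibrant replacement of `D`). -/
def HolimMapSat {I : Type} [SmallCategory I]
    (W : {A B : SSet.{0}} → (A ⟶ B) → Prop)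
    (Q : {A B : SSet.{0}} → (A ⟶ B) → Prop)
    {S : SSet.{0}} {D : I ⥤ SSet.{0}} (c : (Functor.const I).obj S ⟶ D) : Prop :=
  ∀ (D' : I ⥤ SSet.{0}) (j : D ⟶ D'), IsDiagFibrantReplacement W j →
    Q (limit.lift D' (Cone.mk S (c ≫ j)))

variable {C : Type} [SmallCategory C]

/-- Descent of `X` along a map `π : V ⟶ Ū` (e.g. a hypercover of `U`), measured with
weak equivalence class `W` and conclusion `Q` on the canonical map
`X(U) ⟶ holim_{n ∈ Δ} X(V_n)`. -/
def DescentAlong (W Q : {A B : SSet.{0}} → (A ⟶ B) → Prop)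
    (X : SPre C) {U : C} {V : SPre C} (π : V ⟶ unitPre C U) : Prop :=
  HolimMapSat W Q (hyperCone X π)

/-! ## Diagrams indexed by sieves and subcategories of slice categories -/

/-- The diagram `(φ : V → U) ↦ X(V)` over (the opposite of) a category mapping to the
slice `C/U`. -/
def overDiagram (X : SPre C) (U : C) {I : Type} [SmallCategory I] (F : I ⥤ Over U) :
    Iᵒᵖ ⥤ SSet.{0} :=
  F.op ⋙ (Over.forget U).op ⋙ X

/-- The canonical cone from `X(U)` over `overDiagram X U F`. -/
def overCone (X : SPre C) (U : C) {I : Type} [SmallCategory I] (F : I ⥤ Over U) :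
    (Functor.const Iᵒᵖ).obj (X.obj (op U)) ⟶ overDiagram X U F where
  app i := X.map (F.obj i.unop).hom.op
  naturality i j h := by
    simp only [Functor.const_obj_map, Category.id_comp]
    show X.map (F.obj j.unop).hom.op
        = X.map (F.obj i.unop).hom.op ≫ X.map ((F.map h.unop).left.op)
    rw [← X.map_comp, ← op_comp, Over.w (F.map h.unop)]

/-- A covering sieve, regarded as a full subcategory of the slice category `C/U`. -/
def SieveCat {U : C} (R : Sieve U) : Type :=
  ObjectProperty.FullSubcategory (fun g : Over U => R.arrows g.hom)

instance {U : C} (R : Sieve U) : Category (SieveCat R) :=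
  ObjectProperty.FullSubcategory.category _

/-- The inclusion of a sieve into the slice category. -/
def sieveInclusion {U : C} (R : Sieve U) : SieveCat R ⥤ Over U :=
  ObjectProperty.ι _

/-- The discrete diagram `β ↦ X(U_β)`. -/
def prodDiagram (X : SPre C) {ι : Type} (u : ι → C) : Discrete ι ⥤ SSet.{0} :=
  Discrete.functor fun b => X.obj (op (u b))

/-- The cone `X(T) ⟶ (X(U_β))_β` induced by maps `U_β ⟶ T` (e.g. the coproduct
inclusions `U_β ⟶ ∐ U_β`). -/
def prodCone (X : SPre C) {ι : Type} (u : ι → C) (T : C) (inj : ∀ i, u i ⟶ T) :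
    (Functor.const (Discrete ι)).obj (X.obj (op T)) ⟶ prodDiagram X u :=
  Discrete.natTrans fun b => X.map (inj b.as).op

/-! ## The Čech nerve -/

/-- The cosimplicial object `n ↦ X(Č(φ)_n)` of values of `X` on the Čech nerve of
`φ : V ⟶ U`. -/
def cechDiagram [HasFiniteWidePullbacks C] (X : SPre C) {V U : C} (φ : V ⟶ U) :
    SimplexCategory ⥤ SSet.{0} :=
  (Arrow.mk φ).cechNerve.rightOp ⋙ X

/-- The canonical cone `X(U) ⟶ X(Č(φ)_n)`. -/
def cechCone [HasFiniteWidePullbacks C] (X : SPre C) {V U : C} (φ : V ⟶ U) :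
    (Functor.const SimplexCategory).obj (X.obj (op U)) ⟶ cechDiagram X φ where
  app n := X.map (WidePullback.base (fun _ : Fin (n.len + 1) => (Arrow.mk φ).hom)).op
  naturality n₁ n₂ η := by
    simp only [Functor.const_obj_map, Category.id_comp]
    show X.map _ = X.map _ ≫ X.map (((Arrow.mk φ).cechNerve.map η.op).op)
    rw [← X.map_comp, ← op_comp]
    congr 1
    have key : (Arrow.mk φ).cechNerve.map η.op ≫ WidePullback.base _
        = (WidePullback.base fun _ : Fin (n₂.len + 1) => (Arrow.mk φ).hom) := by
      simp [Arrow.cechNerve]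
      apply WidePullback.lift_base
    exact congrArg Quiver.Hom.op key.symm

end
end Paper

/-!
Every vertex of `X` lies in `J X` and every edge of `J X` is invertible in `P X`, so sending a
vertex to its isomorphism class gives a surjection `π₀ J X → Skeleton (P X)`, natural in `X`.
When `X` is a quasi-category it is also injective: filling inner 2-horns shows that every
morphism of `P X` is represented by a single edge, so an isomorphism `x ≅ y` in `P X` is an
invertible edge, i.e. an edge of `J X`. Since `P f` is essentially surjective iff it is surjective
on isomorphism classes, the theorem follows from the naturality square.
-/

namespace CategoryTheory.Functor

lemma essSurj_iff_surjective_mapSkeleton_obj {C D : Type*} [Category C] [Category D]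
    (F : C ⥤ D) : F.EssSurj ↔ Function.Surjective F.mapSkeleton.obj := by
  refine ⟨fun _ => F.mapSkeleton_surjective, fun h => ⟨fun d => ?_⟩⟩
  obtain ⟨c, hc⟩ := h (toSkeleton d)
  rw [← toSkeleton_fromSkeleton_obj c, mapSkeleton_obj_toSkeleton,
    toSkeleton_eq_toSkeleton_iff] at hc
  exact ⟨_, hc⟩

end CategoryTheory.Functor

namespace SSet
open CategoryTheory Simplicial Opposite

lemma Quasicategory.exists_compStruct {X : SSet.{0}} [Quasicategory X] {x₀ x₁ x₂ : X _⦋0⦌}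
    (e₀₁ : Edge x₀ x₁) (e₁₂ : Edge x₁ x₂) :
    ∃ e₀₂ : Edge x₀ x₂, Nonempty (Edge.CompStruct e₀₁ e₁₂ e₀₂) := by
  have w : stdSimplex.δ 0 ≫ yonedaEquiv.symm e₀₁.edge =
      stdSimplex.δ 1 ≫ yonedaEquiv.symm e₁₂.edge := by
    rw [stdSimplex.δ_comp_yonedaEquiv_symm, stdSimplex.δ_comp_yonedaEquiv_symm]
    exact congrArg yonedaEquiv.symm (e₀₁.tgt_eq.trans e₁₂.src_eq.symm)
  obtain ⟨σ, hσ⟩ := Quasicategory.hornFilling (n := 2) (i := 1) (by decide) (by decide)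
    (horn₂₁.isPushout.desc _ _ w)
  have face (j : Fin 3) (hj : j ≠ 1) (e : X _⦋1⦌)
      (he : horn.ι 1 j hj ≫ horn₂₁.isPushout.desc _ _ w = yonedaEquiv.symm e) :
      X.δ j (yonedaEquiv σ) = e := by
    rw [hσ, horn.ι_ι_assoc] at he
    exact (yonedaEquiv_naturality _ _).trans
      ((congrArg yonedaEquiv he).trans (yonedaEquiv.apply_symm_apply e))
  have d₂ := face 2 (by decide) _ (horn₂₁.isPushout.inl_desc _ _ w)
  have d₀ := face 0 (by decide) _ (horn₂₁.isPushout.inr_desc _ _ w)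
  refine ⟨Edge.mk (X.δ 1 (yonedaEquiv σ)) ?_ ?_, ⟨Edge.CompStruct.mk (yonedaEquiv σ) d₂ d₀ rfl⟩⟩
  · exact (δ_comp_δ_apply (i := 1) (j := 1) le_rfl _).symm.trans
      ((congrArg (X.δ 1) d₂).trans e₀₁.src_eq)
  · exact (δ_comp_δ_apply (i := 0) (j := 0) le_rfl _).trans
      ((congrArg (X.δ 0) d₀).trans e₁₂.tgt_eq)

end SSet

namespace Paper
open CategoryTheory Simplicial Opposite SSet

noncomputable section

section

variable {X : SSet.{0}}

def pHom {x y : X _⦋0⦌} (e : Edge x y) : pObj x ⟶ pObj y :=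
  pEdge e.edge e.src_eq e.tgt_eq

lemma pHom_id (x : X _⦋0⦌) : pHom (Edge.id x) = 𝟙 (pObj x) :=
  pIdent x rfl _ _

lemma pHom_comp {x₀ x₁ x₂ : X _⦋0⦌} {e₀₁ : Edge x₀ x₁} {e₁₂ : Edge x₁ x₂} {e₀₂ : Edge x₀ x₂}
    (h : Edge.CompStruct e₀₁ e₁₂ e₀₂) : pHom e₀₁ ≫ pHom e₁₂ = pHom e₀₂ :=
  pComp h.simplex h.d₂ h.d₀ h.d₁ _ _ _ _ _ _

lemma exists_pHom_eq_map [Quasicategory X] {x y : X _⦋0⦌}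
    (p : (Paths.of (Vtx X)).obj x ⟶ (Paths.of (Vtx X)).obj y) :
    ∃ e : Edge x y, pHom e = (Quotient.functor (pRel X)).map p := by
  change Quiver.Path (V := Vtx X) x y at p
  induction p with
  | nil => exact ⟨Edge.id x, (pHom_id x).trans ((Quotient.functor (pRel X)).map_id _).symm⟩
  | cons p g ih =>
    obtain ⟨e, he⟩ := ih
    obtain ⟨e', ⟨h⟩⟩ := Quasicategory.exists_compStruct e (Edge.mk g.1 g.2.1 g.2.2)
    refine ⟨e', ?_⟩
    rw [← pHom_comp h, he]
    exact ((Quotient.functor (pRel X)).map_comp p (Quiver.Hom.toPath g)).symm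

lemma exists_pHom_eq [Quasicategory X] {x y : X _⦋0⦌} (u : pObj x ⟶ pObj y) :
    ∃ e : Edge x y, pHom e = u := by
  obtain ⟨p, rfl⟩ := (Quotient.functor (pRel X)).map_surjective u
  exact exists_pHom_eq_map p

lemma edgeInv_of_isIso_pHom {x y : X _⦋0⦌} (e : Edge x y) (h : IsIso (pHom e)) :
    edgeInv X e.edge :=
  edgeInv_of_isIso _ _ _ h

lemma edgeInv_σ (x : X _⦋0⦌) : edgeInv X (X.σ 0 x) :=
  edgeInv_of_isIso_pHom (Edge.id x) (by rw [pHom_id]; infer_instance)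

lemma exists_edgeInv_of_iso [Quasicategory X] {x y : X _⦋0⦌} (u : pObj x ≅ pObj y) :
    ∃ e : Edge x y, edgeInv X e.edge := by
  obtain ⟨e, he⟩ := exists_pHom_eq u.hom
  exact ⟨e, edgeInv_of_isIso_pHom e (by rw [he]; infer_instance)⟩

lemma edgeInv_map_of_not_injective {Δ : SimplexCategory} (φ : ⦋1⦌ ⟶ Δ)
    (hφ : ¬Function.Injective φ.toOrderHom) (s : X.obj (op Δ)) : edgeInv X (X.map φ.op s) := by
  obtain ⟨i, θ, rfl⟩ := SimplexCategory.eq_σ_comp_of_not_injective φ hφ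
  rw [Fin.fin_one_eq_zero i, op_comp, Functor.map_comp_apply]
  exact edgeInv_σ _

def Jc.vertex (x : X _⦋0⦌) : (Jc X) _⦋0⦌ :=
  ⟨x, fun φ => edgeInv_map_of_not_injective φ
    (fun h => zero_ne_one (h ((Fin.fin_one_eq_zero _).trans (Fin.fin_one_eq_zero _).symm))) x⟩

def Jc.edge (e : X _⦋1⦌) (he : edgeInv X e) : (Jc X) _⦋1⦌ :=
  ⟨e, fun φ => by
    by_cases hφ : Function.Injective φ.toOrderHom
    · have : Mono φ := SimplexCategory.mono_iff_injective.mpr hφ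
      rw [SimplexCategory.eq_id_of_mono φ, op_id, Functor.map_id_apply]
      exact he
    · exact edgeInv_map_of_not_injective φ hφ e⟩

lemma Jc.nonempty_iso (e : (Jc X) _⦋1⦌) : Nonempty (pObj (X.δ 1 e.1) ≅ pObj (X.δ 0 e.1)) := by
  have he : edgeInv X e.1 := by simpa using e.2 (𝟙 _)
  exact ⟨@asIso _ _ _ _ (pEdge e.1 rfl rfl) he⟩

end

def pi0JcToSkeleton (X : SSet.{0}) : pi0 (Jc X) → Skeleton (PC X) :=
  Quot.lift (fun v => toSkeleton (pObj v.1)) <| by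
    rintro _ _ ⟨e, rfl, rfl⟩
    obtain ⟨u⟩ := Jc.nonempty_iso e
    exact congr_toSkeleton_of_iso u

lemma pi0JcToSkeleton_surjective (X : SSet.{0}) : Function.Surjective (pi0JcToSkeleton X) :=
  fun s => ⟨Quot.mk _ (Jc.vertex ((fromSkeleton _).obj s).as), toSkeleton_fromSkeleton_obj s⟩

lemma pi0JcToSkeleton_injective (X : SSet.{0}) [Quasicategory X] :
    Function.Injective (pi0JcToSkeleton X) := by
  rintro ⟨x⟩ ⟨y⟩ h
  obtain ⟨u⟩ := toSkeleton_eq_toSkeleton_iff.mp h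
  obtain ⟨e, he⟩ := exists_edgeInv_of_iso u
  exact Quot.sound ⟨Jc.edge e.edge he, Subtype.ext e.src_eq, Subtype.ext e.tgt_eq⟩

lemma pi0JcToSkeleton_comp_pi0Map {X Y : SSet.{0}} (f : X ⟶ Y) :
    pi0JcToSkeleton Y ∘ pi0Map (Jmap f) = (pFun f).mapSkeleton.obj ∘ pi0JcToSkeleton X := by
  ext ⟨x⟩
  exact ((pFun f).mapSkeleton_obj_toSkeleton (pObj x.1)).symm

end

theorem statement0_general {X Y : SSet.{0}} (hY : SSet.Quasicategory Y)
    (f : X ⟶ Y) :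
    EssSurjSSet f ↔ Function.Surjective (pi0Map (Jmap f)) := by
  rw [EssSurjSSet, Functor.essSurj_iff_surjective_mapSkeleton_obj,
    ← Function.Surjective.of_comp_iff _ (pi0JcToSkeleton_surjective X),
    ← pi0JcToSkeleton_comp_pi0Map,
    Function.Surjective.of_comp_iff' ⟨pi0JcToSkeleton_injective Y, pi0JcToSkeleton_surjective Y⟩]

/-- Lemma 1.5. A morphism `f : X ⟶ Y` of quasi-categories is
essentially surjective (i.e. `P f` is an essentially surjective functor of path
categories) iff `π₀ J(f) : π₀ J(X) → π₀ J(Y)` is surjective. -/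
theorem statement0 {X Y : SSet.{0}} (hX : SSet.Quasicategory X) (hY : SSet.Quasicategory Y)
    (f : X ⟶ Y) :
    EssSurjSSet f ↔ Function.Surjective (pi0Map (Jmap f)) :=
  statement0_general hY f

end Paper
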